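/- For a positive integer n, y(n) < 0 if and only if either 5 ≤ n ≤ 335, or 338 ≤ n ≤ 350, or 365 ≤ n ≤ 368. -/

import Mathlib

/-!
With `z(n) = ⌊(2n - 1)/3⌋` and `m = m(n) = ⌊√(2n)⌋`, `y(n) < 0` exactly when
`2 ^ E < n ^ (m - 1)`, where `E = 2n + 2 - 2z(n) - m ≥ (2n + 8)/3 - m`. If `r = ⌈log₂ n⌉` then
`n ≤ 2 ^ r`, and since `m² ≤ 2n` while `r` only grows logarithmically, `r (m - 1) ≤ E` as soon as
`n > 512`; hence `n ^ (m - 1) ≤ 2 ^ E` and `y(n) ≥ 0` there. The finitely many `n ≤ 512` are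
checked by evaluation.
-/

-- Truncated subtraction is harmless here: the exponent is nonnegative whenever `m ^ 2 ≤ 2 * n`.
def twoExponent (n m : ℕ) : ℕ := 2 * n + 2 - 2 * ((2 * n - 1) / 3) - m

set_option maxRecDepth 100000 in
set_option synthInstance.maxSize 1000 in
theorem two_pow_lt_pow_iff_of_lt_513 :
    ∀ n : ℕ, n < 513 → ∀ m : ℕ, m < 33 → m ^ 2 ≤ 2 * n → 2 * n < (m + 1) ^ 2 →
      (2 ^ twoExponent n m < n ^ (m - 1) ↔
        (5 ≤ n ∧ n ≤ 335) ∨ (338 ≤ n ∧ n ≤ 350) ∨ (365 ≤ n ∧ n ≤ 368)) := by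
  decide

theorem sq_three_mul_add_four_le_two_pow {k : ℕ} (hk : 11 ≤ k) : (3 * k + 4) ^ 2 ≤ 2 ^ k := by
  induction k, hk using Nat.le_induction with
  | base => norm_num
  | succ k _ ih => rw [pow_succ 2 k]; nlinarith

theorem three_mul_mul_pred_add_le {r m : ℕ} (hm : 32 ≤ m) (hr : 2 ^ r < (m + 1) ^ 2) :
    3 * (r * (m - 1)) + 3 * m ≤ m ^ 2 + 8 := by
  obtain ⟨k, rfl⟩ : ∃ k, m = k + 1 := ⟨m - 1, by omega⟩
  simp only [Nat.add_sub_cancel]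
  rcases le_or_gt r 10 with hr10 | hr11
  · nlinarith
  · have : 3 * r + 4 < k + 2 :=
      (Nat.pow_lt_pow_iff_left two_ne_zero).1 ((sq_three_mul_add_four_le_two_pow hr11).trans_lt hr)
    nlinarith

theorem pow_pred_le_two_pow_twoExponent {n m : ℕ} (hn : 512 < n) (hm : m ^ 2 ≤ 2 * n)
    (hm' : 2 * n < (m + 1) ^ 2) : n ^ (m - 1) ≤ 2 ^ twoExponent n m := by
  set r := Nat.clog 2 n
  have hr_pred : 2 ^ (r - 1) < n := by
    simpa using Nat.pow_pred_clog_lt_self one_lt_two (by omega : 1 < n)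
  have hr : 2 ^ r < (m + 1) ^ 2 :=
    calc 2 ^ r ≤ 2 ^ (r - 1 + 1) := Nat.pow_le_pow_right two_pos (by omega)
      _ = 2 * 2 ^ (r - 1) := by ring
      _ < (m + 1) ^ 2 := by omega
  have h32 : 32 ≤ m := by nlinarith
  have key := three_mul_mul_pred_add_le h32 hr
  calc n ^ (m - 1) ≤ (2 ^ r) ^ (m - 1) := Nat.pow_le_pow_left (Nat.le_pow_clog one_lt_two n) _
    _ = 2 ^ (r * (m - 1)) := (pow_mul 2 r (m - 1)).symm
    _ ≤ 2 ^ twoExponent n m := Nat.pow_le_pow_right two_pos (by unfold twoExponent; omega)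

theorem stmt_general
    (z : ℕ → ℤ) (m : ℕ → ℕ) (c : ℕ → ℤ) (y : ℕ → ℚ)
    (hz : ∀ n : ℕ, 1 ≤ n → 3 * z n < 2 * (n : ℤ) ∧ ∀ w : ℤ, 3 * w < 2 * (n : ℤ) → w ≤ z n)
    (hm : ∀ n : ℕ, 1 ≤ n → (m n : ℤ) ^ 2 ≤ 2 * (n : ℤ) ∧ ∀ w : ℕ, (w : ℤ) ^ 2 ≤ 2 * (n : ℤ) → w ≤ m n)
    (hc : ∀ n : ℕ, c n = 2 * (n : ℤ) - 2 * z n + 2)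
    (hy : ∀ n : ℕ, y n = (2 : ℚ) ^ (c n - (m n : ℤ)) - (n : ℚ) ^ ((m n : ℤ) - 1)) :
    ∀ n : ℕ, 1 ≤ n →
      (y n < 0 ↔ (5 ≤ n ∧ n ≤ 335) ∨ (338 ≤ n ∧ n ≤ 350) ∨ (365 ≤ n ∧ n ≤ 368)) := by
  intro n hn
  obtain ⟨hz_lt, hz_max⟩ := hz n hn
  have hz_ge : 2 * (n : ℤ) ≤ 3 * z n + 3 := by
    by_contra! h
    linarith [hz_max (z n + 1) (by linarith)]
  obtain ⟨hm_le, hm_max⟩ := hm n hn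
  have hm_lt : 2 * n < (m n + 1) ^ 2 := by
    by_contra! h
    have := hm_max (m n + 1) (by exact_mod_cast h)
    omega
  replace hm_le : m n ^ 2 ≤ 2 * n := by exact_mod_cast hm_le
  have hm_pos : 1 ≤ m n := by nlinarith
  have h3m : 3 * m n ≤ m n ^ 2 + 8 := by nlinarith
  have hexp : c n - m n = (twoExponent n (m n) : ℤ) := by unfold twoExponent; rw [hc]; omega
  have hy_neg : y n < 0 ↔ 2 ^ twoExponent n (m n) < n ^ (m n - 1) := by
    rw [hy, hexp, show (m n : ℤ) - 1 = ((m n - 1 : ℕ) : ℤ) by omega, zpow_natCast, zpow_natCast,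
      sub_neg]
    exact_mod_cast Iff.rfl
  rw [hy_neg]
  rcases lt_or_ge n 513 with hsmall | hlarge
  · exact two_pow_lt_pow_iff_of_lt_513 n hsmall (m n) (by nlinarith) hm_le hm_lt
  · have := pow_pred_le_two_pow_twoExponent hlarge hm_le hm_lt
    constructor <;> intro h <;> omega

theorem stmt
    (z : ℕ → ℤ) (m r : ℕ → ℕ) (c x : ℕ → ℤ) (y : ℕ → ℚ)
    (hz : ∀ n : ℕ, 1 ≤ n → 3 * z n < 2 * (n : ℤ) ∧ ∀ w : ℤ, 3 * w < 2 * (n : ℤ) → w ≤ z n)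
    (hm : ∀ n : ℕ, 1 ≤ n → (m n : ℤ) ^ 2 ≤ 2 * (n : ℤ) ∧ ∀ w : ℕ, (w : ℤ) ^ 2 ≤ 2 * (n : ℤ) → w ≤ m n)
    (hr : ∀ n : ℕ, 1 ≤ n → n ≤ 2 ^ r n ∧ ∀ s : ℕ, n ≤ 2 ^ s → r n ≤ s)
    (hc : ∀ n : ℕ, c n = 2 * (n : ℤ) - 2 * z n + 2)
    (hx : ∀ n : ℕ, x n = z n - ((r n : ℤ) + 1) * (m n : ℤ))
    (hy : ∀ n : ℕ, y n = (2 : ℚ) ^ (c n - (m n : ℤ)) - (n : ℚ) ^ ((m n : ℤ) - 1)) :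
    ∀ n : ℕ, 1 ≤ n →
      (y n < 0 ↔ (5 ≤ n ∧ n ≤ 335) ∨ (338 ≤ n ∧ n ≤ 350) ∨ (365 ≤ n ∧ n ≤ 368)) :=
  stmt_general z m c y hz hm hc hy
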